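/- Let r ≥ 3, n = p_1^{n_1}⋯p_r^{n_r} with primes p_1 < ... < p_r, and β_a^s defined by β_a^s = φ(n) + (n/(p_1⋯p_r))·(1/p_a^{s-1})·[ (p_1⋯p_r)/p_a + φ((p_1⋯p_r)/p_a)·(p_a^{s-1} − 2) ]. Then β_r^1 < β_1^{n_1}. -/

import Mathlib

/-!
Write the radical `p₁ ⋯ p_r` as `p₁ · M · p_r`, with `M` the product of the middle primes. Both
sides share `φ(n)` and the factor `n / (p₁ ⋯ p_r)`, and what remains follows from `φ(M) < M`
together with `p₁ M < (p₁ + p_r - 2) φ(M)`. The latter bounds `M / φ(M) = ∏ p / (p - 1)` over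
the middle primes: they are odd, so consecutive ones differ by at least `2`, and the product is
at most `(p_r - 1) / (p₂ - 1) ≤ (p_r - 1) / p₁` by telescoping.
-/

noncomputable def beta (r : ℕ) (p e : ℕ → ℕ) (a s : ℕ) : ℚ :=
  (Nat.totient (∏ i ∈ Finset.range r, p i ^ e i) : ℚ) +
    ((∏ i ∈ Finset.range r, p i ^ e i : ℕ) : ℚ) /
        ((∏ i ∈ Finset.range r, p i : ℕ) : ℚ) *
      (1 / (p a : ℚ) ^ (s - 1)) *
      (((∏ i ∈ Finset.range r, p i : ℕ) : ℚ) / (p a : ℚ) +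
        (Nat.totient ((∏ i ∈ Finset.range r, p i) / p a) : ℚ) *
          ((p a : ℚ) ^ (s - 1) - 2))

open Finset
open scoped Nat

theorem Nat.totient_prod_of_prime {ι : Type*} (s : Finset ι) (g : ι → ℕ)
    (hg : ∀ i ∈ s, (g i).Prime) (hinj : Set.InjOn g s) :
    φ (∏ i ∈ s, g i) = ∏ i ∈ s, (g i - 1) := by
  classical
  induction s using Finset.induction_on with
  | empty => simp
  | insert a s ha ih =>
    rw [coe_insert, Set.injOn_insert ha] at hinj
    have hcop : (g a).Coprime (∏ i ∈ s, g i) := Nat.Coprime.prod_right fun i hi =>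
      (Nat.coprime_primes (hg a (mem_insert_self a s)) (hg i (mem_insert_of_mem hi))).2
        fun h => hinj.2 ⟨i, hi, h.symm⟩
    rw [prod_insert ha, prod_insert ha, Nat.totient_mul hcop,
      Nat.totient_prime (hg a (mem_insert_self a s)),
      ih (fun i hi => hg i (mem_insert_of_mem hi)) hinj.1]

theorem Nat.add_two_mul_le_of_odd {x : ℕ → ℕ} {n : ℕ} (hodd : ∀ i ≤ n, Odd (x i))
    (hx : StrictMonoOn x (Set.Iic n)) : ∀ i ≤ n, x 0 + 2 * i ≤ x i := by
  intro i hi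
  induction i with
  | zero => simp
  | succ i ih =>
    have h₁ := Nat.odd_iff.mp (hodd i (by omega))
    have h₂ := Nat.odd_iff.mp (hodd (i + 1) hi)
    have := hx (Set.mem_Iic.2 (by omega : i ≤ n)) (Set.mem_Iic.2 hi) i.lt_succ_self
    have := ih (by omega)
    omega

/-- The bound `x i / (x i - 1) ≤ (a + 2 i + 1) / (a + 2 i - 1)` makes the product telescope. -/
theorem sub_one_mul_prod_le_mul_prod_sub_one {R : Type*} [CommRing R] [LinearOrder R]
    [IsStrictOrderedRing R] (a : R) (x : ℕ → R) (k : ℕ) (ha : 1 ≤ a)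
    (hx : ∀ i < k, a + 2 * i ≤ x i) :
    (a - 1) * ∏ i ∈ range k, x i ≤ (a + 2 * k - 1) * ∏ i ∈ range k, (x i - 1) := by
  induction k with
  | zero => simp
  | succ k ih =>
    have hxk := hx k (by omega)
    have hk : (0 : R) ≤ k := k.cast_nonneg
    have hprod : 0 ≤ ∏ i ∈ range k, (x i - 1) := prod_nonneg fun i hi => by
      have := hx i (by simp at hi; omega)
      have : (0 : R) ≤ i := i.cast_nonneg
      linarith
    have hstep : (a + 2 * k - 1) * x k ≤ (a + 2 * (k + 1 : ℕ) - 1) * (x k - 1) := by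
      push_cast; nlinarith
    calc (a - 1) * ∏ i ∈ range (k + 1), x i
        = ((a - 1) * ∏ i ∈ range k, x i) * x k := by rw [prod_range_succ, mul_assoc]
      _ ≤ ((a + 2 * k - 1) * ∏ i ∈ range k, (x i - 1)) * x k :=
          mul_le_mul_of_nonneg_right (ih fun i hi => hx i (by omega)) (by linarith)
      _ = ((a + 2 * k - 1) * x k) * ∏ i ∈ range k, (x i - 1) := by ring
      _ ≤ ((a + 2 * (k + 1 : ℕ) - 1) * (x k - 1)) * ∏ i ∈ range k, (x i - 1) :=
          mul_le_mul_of_nonneg_right hstep hprod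
      _ = _ := by rw [prod_range_succ]; ring

section Inequalities

variable {K : Type*} [Field K] [LinearOrder K] [IsStrictOrderedRing K]

theorem mul_lt_add_sub_two_mul_of_sub_one_mul_le {q a L m f : K} (hq : 1 < q) (hqa : q + 1 ≤ a)
    (hL : 1 ≤ L) (hf : 0 < f) (h : (a - 1) * m ≤ (L - 1) * f) :
    q * m < (q + L - 2) * f := by
  have hlt : q * (L - 1) < (a - 1) * (q + L - 2) := by nlinarith
  have : (a - 1) * (q * m) < (a - 1) * ((q + L - 2) * f) :=
    calc (a - 1) * (q * m) = q * ((a - 1) * m) := by ring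
      _ ≤ q * ((L - 1) * f) := by gcongr
      _ = (q * (L - 1)) * f := by ring
      _ < ((a - 1) * (q + L - 2)) * f := by gcongr
      _ = _ := by ring
  exact lt_of_mul_lt_mul_left this (by linarith)

theorem sub_lt_div_of_mul_lt {q L m f t : K} (ht : 1 ≤ t) (hfm : f < m) (hqL : q < L)
    (h : q * m < (q + L - 2) * f) :
    q * m - (q - 1) * f < (L * m + (L - 1) * f * (t - 2)) / t := by
  rw [lt_div_iff₀ (by linarith)]
  nlinarith [mul_nonneg (sub_nonneg.2 ht) (sub_nonneg.2 h.le),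
    mul_pos (sub_pos.2 hqL) (sub_pos.2 hfm)]

end Inequalities

section OddPrimes

variable {x : ℕ → ℕ} {k : ℕ}

theorem sub_one_mul_prod_le_mul_totient_prod (hx : ∀ i ≤ k, (x i).Prime) (hx₀ : 2 < x 0)
    (hmono : StrictMonoOn x (Set.Iic k)) :
    ((x 0 : ℚ) - 1) * ∏ i ∈ range k, x i ≤
      ((x k : ℚ) - 1) * φ (∏ i ∈ range k, x i) := by
  have hodd : ∀ i ≤ k, Odd (x i) := fun i hi =>
    (hx i hi).odd_of_ne_two <| ne_of_gt <| hx₀.trans_le <|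
      hmono.monotoneOn (Set.mem_Iic.2 k.zero_le) (Set.mem_Iic.2 hi) i.zero_le
  have hgap := Nat.add_two_mul_le_of_odd hodd hmono
  have hprime : ∀ i ∈ range k, (x i).Prime := fun i hi => hx i (by simp at hi; omega)
  have hinj : Set.InjOn x (range k) := hmono.injOn.mono fun i hi => by simp at hi ⊢; omega
  rw [Nat.totient_prod_of_prime _ _ hprime hinj, Nat.cast_prod, Nat.cast_prod,
    prod_congr rfl fun i hi => Nat.cast_pred (hprime i hi).pos]
  calc ((x 0 : ℚ) - 1) * ∏ i ∈ range k, (x i : ℚ)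
      ≤ (x 0 + 2 * k - 1) * ∏ i ∈ range k, ((x i : ℚ) - 1) :=
        sub_one_mul_prod_le_mul_prod_sub_one _ _ k (by exact_mod_cast (hx 0 k.zero_le).one_le)
          fun i hi => by exact_mod_cast hgap i hi.le
    _ ≤ (x k - 1) * ∏ i ∈ range k, ((x i : ℚ) - 1) := by
        gcongr
        · exact prod_nonneg fun i hi => sub_nonneg.2 (by exact_mod_cast (hprime i hi).one_le)
        · exact_mod_cast hgap k le_rfl

theorem mul_prod_lt_mul_totient_prod {q : ℕ} (hq : q.Prime) (hqx : q < x 0)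
    (hx : ∀ i ≤ k, (x i).Prime) (hmono : StrictMonoOn x (Set.Iic k)) :
    (q : ℚ) * ∏ i ∈ range k, x i < (q + x k - 2) * φ (∏ i ∈ range k, x i) :=
  mul_lt_add_sub_two_mul_of_sub_one_mul_le (by exact_mod_cast hq.one_lt) (by exact_mod_cast hqx)
    (by exact_mod_cast (hx k le_rfl).one_le)
    (by exact_mod_cast Nat.totient_pos.2 <| prod_pos fun i hi => (hx i (by simp at hi; omega)).pos)
    (sub_one_mul_prod_le_mul_totient_prod hx (hq.two_le.trans_lt hqx) hmono)

end OddPrimes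

theorem beta_lt_beta_of_mul_lt {r : ℕ} {p : ℕ → ℕ} (e : ℕ → ℕ) (s : ℕ) {M : ℕ}
    (hP : ∏ i ∈ range r, p i = p 0 * M * p (r - 1))
    (hp₀ : (p 0).Prime) (hpL : (p (r - 1)).Prime) (hcop₀ : (p 0).Coprime M)
    (hcopL : M.Coprime (p (r - 1))) (hlt : p 0 < p (r - 1)) (hM : φ M < M)
    (h : (p 0 : ℚ) * M < (p 0 + p (r - 1) - 2) * φ M) :
    beta r p e (r - 1) 1 < beta r p e 0 s := by
  have hM₀ : 0 < M := Nat.zero_lt_of_lt hM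
  have hq : (p 0 : ℚ) ≠ 0 := by exact_mod_cast hp₀.ne_zero
  have hL : (p (r - 1) : ℚ) ≠ 0 := by exact_mod_cast hpL.ne_zero
  have hP₀ : 0 < p 0 * (M * p (r - 1)) := Nat.mul_pos hp₀.pos (Nat.mul_pos hM₀ hpL.pos)
  have hN : 0 < ∏ i ∈ range r, p i ^ e i := Nat.pos_of_ne_zero <|
    prod_ne_zero_iff.2 fun i hi =>
      pow_ne_zero _ (prod_ne_zero_iff.1 ((hP.trans (mul_assoc _ _ _)).trans_ne hP₀.ne') i hi)
  have hbr := sub_lt_div_of_mul_lt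
    (one_le_pow₀ (n := s - 1) (by exact_mod_cast hp₀.one_le : (1 : ℚ) ≤ p 0))
    (by exact_mod_cast hM) (by exact_mod_cast hlt) h
  unfold beta
  rw [add_lt_add_iff_left, hP, Nat.mul_div_cancel _ hpL.pos, mul_assoc (p 0),
    Nat.mul_div_cancel_left _ hp₀.pos, Nat.totient_mul hcop₀, Nat.totient_mul hcopL,
    Nat.totient_prime hp₀, Nat.totient_prime hpL]
  set c : ℚ :=
    ((∏ i ∈ range r, p i ^ e i : ℕ) : ℚ) / ((p 0 * (M * p (r - 1)) : ℕ) : ℚ)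
  have hc : 0 < c := div_pos (Nat.cast_pos.2 hN) (Nat.cast_pos.2 hP₀)
  push_cast [Nat.cast_pred hp₀.pos, Nat.cast_pred hpL.pos]
  calc _ = c * (p 0 * M - (p 0 - 1) * φ M) := by field_simp; ring
    _ < c * ((p (r - 1) * M + (p (r - 1) - 1) * φ M * (p 0 ^ (s - 1) - 2)) / p 0 ^ (s - 1)) :=
        mul_lt_mul_of_pos_left hbr hc
    _ = _ := by field_simp

theorem stmt_13_general (r : ℕ) (hr : 3 ≤ r) (p e : ℕ → ℕ)
    (hp : ∀ i < r, (p i).Prime)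
    (hmono : ∀ i j, i < j → j < r → p i < p j) :
    beta r p e (r - 1) 1 < beta r p e 0 (e 0) := by
  obtain ⟨k, rfl⟩ : ∃ k, r = k + 3 := ⟨r - 3, by omega⟩
  have hmid : StrictMonoOn (fun i => p (i + 1)) (Set.Iic (k + 1)) := fun i hi j hj hij =>
    hmono _ _ (by omega) (by simp at hj; omega)
  have hcop {i j : ℕ} (hi : i < k + 3) (hj : j < k + 3) (hij : i < j) : (p i).Coprime (p j) :=
    (Nat.coprime_primes (hp i hi) (hp j hj)).2 (hmono i j hij hj).ne
  set M := ∏ i ∈ range (k + 1), p (i + 1)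
  have hM : 1 < M := (hp 1 (by omega)).one_lt.trans_le <| Nat.le_of_dvd
    (prod_pos fun i hi => (hp (i + 1) (by simp at hi; omega)).pos)
    (dvd_prod_of_mem (fun i => p (i + 1)) (mem_range.2 k.succ_pos))
  refine beta_lt_beta_of_mul_lt e (e 0) (M := M) ?_ (hp 0 (by omega)) (hp (k + 2) (by omega))
    (Nat.Coprime.prod_right fun i hi => hcop (by omega) (by simp at hi; omega) (by omega))
    (Nat.Coprime.prod_left fun i hi =>
      hcop (by simp at hi; omega) (by omega) (by simp at hi; omega))
    (hmono 0 (k + 2) (by omega) (by omega)) (Nat.totient_lt M hM)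
    (mul_prod_lt_mul_totient_prod (hp 0 (by omega)) (hmono 0 1 (by omega) (by omega))
      (fun i hi => hp (i + 1) (by omega)) hmid)
  rw [show k + 3 - 1 = k + 2 from rfl, prod_range_succ, prod_range_succ' _ (k + 1)]
  ring

theorem stmt_13 (r : ℕ) (hr : 3 ≤ r) (p e : ℕ → ℕ)
    (hp : ∀ i < r, (p i).Prime)
    (hmono : ∀ i j, i < j → j < r → p i < p j)
    (he : ∀ i < r, 1 ≤ e i) :
    beta r p e (r - 1) 1 < beta r p e 0 (e 0) :=
  stmt_13_general r hr p e hp hmono
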